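/- Let φ : ℝⁿ → ℝ be convex, f : ℝⁿ → ℝ differentiable at x with r(x) := x − prox_φ(x − ∇f(x)) ≠ 0, and let G be a symmetric n×n matrix with ⟨d, G d⟩ ≥ μ‖d‖² for all d, where μ := ν‖r(x)‖^δ with ν ≥ ν_min > 0 and δ ∈ (0,1]. Let x̄ be the unique minimizer of q̂(y) := f(x) + ⟨∇f(x), y − x⟩ + (1/2)⟨y − x, G(y − x)⟩ + φ(y), define R(y) := y − prox_φ(y − ∇f(x) − G(y − x)), and let x̂ satisfy ‖R(x̂)‖ ≤ θ‖r(x)‖^{1+τ} with θ > 0 and τ ≥ δ. Then μ‖x̂ − x̄‖ ≤ (1 + ‖G‖)‖R(x̂)‖, and consequently ‖x̂ − x̄‖ ≤ ν_min⁻¹ θ (1 + ‖G‖) ‖r(x)‖^{1+τ−δ}. -/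

import Mathlib

/-!
For convex `φ` and differentiable `h`, a minimizer `p` of `h + φ` satisfies
`0 ≤ h'(p) (y - p) + φ y - φ p` for all `y`. For the prox point `p` of `z` this reads
`⟪z - p, y - p⟫ ≤ φ y - φ p`, and for the minimizer `x̄` of the model (here the symmetry of `G`
enters) `0 ≤ ⟪∇f(x) + G (x̄ - x), y - x̄⟫ + φ y - φ x̄`. Taking `z = x̂ - ∇f(x) - G (x̂ - x)`,
testing the first inequality at `x̄`, the second at `p`, and adding them gives
`⟪ρ - G d, ρ - d⟫ ≤ 0` for `ρ = R(x̂) = x̂ - p` and `d = x̂ - x̄`. Expanding and using coercivity,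
`μ‖d‖² ≤ ⟪d, G d⟫ ≤ ⟪ρ, d⟫ + ⟪G d, ρ⟫ ≤ (1 + ‖G‖)‖ρ‖‖d‖`. The second bound follows from
`μ ≥ ν_min ‖r(x)‖^δ` and `‖r(x)‖^{1+τ} = ‖r(x)‖^δ ‖r(x)‖^{1+τ-δ}`.
-/

open scoped RealInnerProductSpace

noncomputable section

/-- The proximity operator `prox_g(z)`. -/
noncomputable def proxPt {n : ℕ} (g : EuclideanSpace ℝ (Fin n) → ℝ)
    (z : EuclideanSpace ℝ (Fin n)) : EuclideanSpace ℝ (Fin n) :=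
  Classical.epsilon fun p => ∀ y, g p + (1 / 2) * ‖p - z‖ ^ 2 ≤ g y + (1 / 2) * ‖y - z‖ ^ 2

open Set Metric

section NormedSpace

variable {E : Type*} [NormedAddCommGroup E] [NormedSpace ℝ E] {φ : E → ℝ}

theorem ConvexOn.sub_norm_sub_mul_le {z y : E} {m : ℝ} (hφ : ConvexOn ℝ univ φ)
    (hm : ∀ u ∈ closedBall z 1, m ≤ φ u) (hy : 1 ≤ ‖y - z‖) :
    φ z - ‖y - z‖ * (φ z - m) ≤ φ y := by
  set s := ‖y - z‖
  have hs : 0 < s := one_pos.trans_le hy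
  have hu : z + s⁻¹ • (y - z) ∈ closedBall z 1 := by
    rw [mem_closedBall, dist_eq_norm, add_sub_cancel_left, norm_smul, Real.norm_eq_abs,
      abs_of_pos (inv_pos.2 hs), inv_mul_cancel₀ hs.ne']
  have hconv := hφ.2 (mem_univ z) (mem_univ y) (sub_nonneg.2 (inv_le_one_of_one_le₀ hy))
    (inv_nonneg.2 hs.le) (sub_add_cancel 1 s⁻¹)
  rw [show (1 - s⁻¹) • z + s⁻¹ • y = z + s⁻¹ • (y - z) by module, smul_eq_mul,
    smul_eq_mul] at hconv
  have := mul_le_mul_of_nonneg_left ((hm _ hu).trans hconv) hs.le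
  rw [mul_add, ← mul_assoc, ← mul_assoc, mul_sub, mul_one, mul_inv_cancel₀ hs.ne'] at this
  linarith

theorem ConvexOn.exists_forall_add_half_norm_sq_le [FiniteDimensional ℝ E]
    (hφ : ConvexOn ℝ univ φ) (z : E) :
    ∃ p, ∀ y, φ p + (1 / 2) * ‖p - z‖ ^ 2 ≤ φ y + (1 / 2) * ‖y - z‖ ^ 2 := by
  have hcont : Continuous φ := continuousOn_univ.mp (hφ.continuousOn isOpen_univ)
  obtain ⟨w, -, hw⟩ := (isCompact_closedBall z 1).exists_isMinOn
    ⟨z, mem_closedBall_self zero_le_one⟩ hcont.continuousOn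
  set c := φ z - φ w
  -- `φ` decreases at most linearly away from `z`, so the quadratic term makes the sum coercive.
  refine (hcont.add (by fun_prop)).exists_forall_le' (x₀ := z) ?_
  filter_upwards [tendsto_norm_cocompact_atTop.eventually_ge_atTop (max 1 (2 * c) + ‖z‖)]
    with y hy
  have hyz : max 1 (2 * c) ≤ ‖y - z‖ := by linarith [norm_sub_norm_le y z]
  have hgrowth := hφ.sub_norm_sub_mul_le (m := φ w) hw ((le_max_left _ _).trans hyz)
  show φ z + (1 / 2) * ‖z - z‖ ^ 2 ≤ φ y + (1 / 2) * ‖y - z‖ ^ 2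
  rw [sub_self, norm_zero]
  nlinarith [le_max_right 1 (2 * c), norm_nonneg (y - z)]

theorem IsMinOn.nonneg_fderiv_add_sub_of_convexOn {h : E → ℝ} {h' : E →L[ℝ] ℝ} {s : Set E}
    {p y : E} (hφ : ConvexOn ℝ s φ) (hmin : IsMinOn (fun u => h u + φ u) s p)
    (hh : HasFDerivAt h h' p) (hp : p ∈ s) (hy : y ∈ s) :
    0 ≤ h' (y - p) + (φ y - φ p) := by
  set F : ℝ → ℝ := fun t => h (p + t • (y - p)) + t * (φ y - φ p)
  have hF : HasDerivAt F (h' (y - p) + (φ y - φ p)) 0 := by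
    have hline : HasDerivAt (fun t : ℝ => p + t • (y - p)) (y - p) 0 := by
      simpa using ((hasDerivAt_id (0 : ℝ)).smul_const (y - p)).const_add p
    have hh0 : HasFDerivAt h h' (p + (0 : ℝ) • (y - p)) := by simpa using hh
    have := (hh0.comp_hasDerivAt 0 hline).add ((hasDerivAt_id (0 : ℝ)).mul_const (φ y - φ p))
    rwa [one_mul] at this
  -- `φ` lies below its chord on `[p, y]`, so `F t - F 0 ≥ (h + φ) (p + t • (y - p)) - (h + φ) p`.
  have hFmin : IsMinOn F (Icc 0 1) 0 := by
    rintro t ⟨ht0, ht1⟩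
    have hcomb : (1 - t) • p + t • y = p + t • (y - p) := by module
    have hconv := hφ.2 hp hy (sub_nonneg.2 ht1) ht0 (sub_add_cancel 1 t)
    rw [hcomb, smul_eq_mul, smul_eq_mul] at hconv
    have hmem : p + t • (y - p) ∈ s :=
      hcomb ▸ hφ.1 hp hy (sub_nonneg.2 ht1) ht0 (sub_add_cancel 1 t)
    have := hmin hmem
    simp only [F, zero_smul, add_zero, zero_mul, mem_ofPred_eq] at this ⊢
    linarith
  have := hFmin.localize.hasFDerivWithinAt_nonneg hF.hasFDerivAt.hasFDerivWithinAt
    (y := 1) (mem_posTangentConeAt_of_segment_subset (by simp [segment_eq_Icc]))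
  simpa using this

end NormedSpace

section InnerProductSpace

variable {E : Type*} [NormedAddCommGroup E] [InnerProductSpace ℝ E]

theorem hasFDerivAt_half_inner_sub_map_sub {G : E →L[ℝ] E} (hG : ∀ u v, ⟪G u, v⟫ = ⟪u, G v⟫)
    (c p : E) :
    HasFDerivAt (fun u => (1 / 2) * ⟪u - c, G (u - c)⟫) (innerSL ℝ (G (p - c))) p := by
  have hsub := (hasFDerivAt_id (𝕜 := ℝ) p).sub_const c
  refine ((hsub.inner ℝ (G.hasFDerivAt.comp p hsub)).const_mul (1 / 2)).congr_fderiv ?_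
  ext v
  simp only [id_eq, Function.comp_apply, ContinuousLinearMap.comp_id, smul_apply,
    ContinuousLinearMap.comp_apply, ContinuousLinearMap.prod_apply, ContinuousLinearMap.id_apply,
    fderivInnerCLM_apply, smul_eq_mul, coe_innerSL_apply]
  rw [real_inner_comm (G (p - c)) v, hG]
  ring

theorem mul_norm_le_of_inner_sub_map_nonpos {G : E →L[ℝ] E} {μ : ℝ} {ρ d : E}
    (hcoer : μ * ‖d‖ ^ 2 ≤ ⟪d, G d⟫) (h : ⟪ρ - G d, ρ - d⟫ ≤ 0) :
    μ * ‖d‖ ≤ (1 + ‖G‖) * ‖ρ‖ := by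
  have hexpand : ⟪ρ - G d, ρ - d⟫ = ‖ρ‖ ^ 2 - ⟪ρ, d⟫ - ⟪G d, ρ⟫ + ⟪d, G d⟫ := by
    rw [inner_sub_left, inner_sub_right, inner_sub_right, real_inner_self_eq_norm_sq,
      real_inner_comm d (G d)]
    ring
  have hρd : ⟪ρ, d⟫ ≤ ‖ρ‖ * ‖d‖ := real_inner_le_norm ρ d
  have hGdρ : ⟪G d, ρ⟫ ≤ ‖G‖ * ‖d‖ * ‖ρ‖ :=
    (real_inner_le_norm _ _).trans (mul_le_mul_of_nonneg_right (G.le_opNorm d) (norm_nonneg ρ))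
  have hsq : μ * ‖d‖ * ‖d‖ ≤ (1 + ‖G‖) * ‖ρ‖ * ‖d‖ := by nlinarith
  rcases (norm_nonneg d).eq_or_lt with hd | hd
  · rw [← hd, mul_zero]
    positivity
  · exact le_of_mul_le_mul_right hsq hd

end InnerProductSpace

section Euclidean

variable {n : ℕ} {φ : EuclideanSpace ℝ (Fin n) → ℝ}

theorem ConvexOn.proxPt_spec (hφ : ConvexOn ℝ univ φ) (z y : EuclideanSpace ℝ (Fin n)) :
    φ (proxPt φ z) + (1 / 2) * ‖proxPt φ z - z‖ ^ 2 ≤ φ y + (1 / 2) * ‖y - z‖ ^ 2 :=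
  Classical.epsilon_spec (hφ.exists_forall_add_half_norm_sq_le z) y

theorem ConvexOn.inner_sub_proxPt_le (hφ : ConvexOn ℝ univ φ) (z y : EuclideanSpace ℝ (Fin n)) :
    ⟪z - proxPt φ z, y - proxPt φ z⟫ ≤ φ y - φ (proxPt φ z) := by
  set p := proxPt φ z
  have hmin : IsMinOn (fun u => (1 / 2) * ‖u - z‖ ^ 2 + φ u) univ p :=
    isMinOn_univ_iff.2 fun u => by linarith [hφ.proxPt_spec z u]
  have hderiv : HasFDerivAt (fun u => (1 / 2) * ‖u - z‖ ^ 2) (innerSL ℝ (p - z)) p := by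
    refine (((hasFDerivAt_id p).sub_const z).norm_sq.const_mul (1 / 2)).congr_fderiv ?_
    ext v
    simp
  have := hmin.nonneg_fderiv_add_sub_of_convexOn hφ hderiv (mem_univ p) (mem_univ y)
  rw [innerSL_apply_apply, ← neg_sub z p, inner_neg_left] at this
  linarith

theorem ConvexOn.mul_norm_sub_le_norm_sub_proxPt (hφ : ConvexOn ℝ univ φ)
    {G : EuclideanSpace ℝ (Fin n) →L[ℝ] EuclideanSpace ℝ (Fin n)}
    (hG : ∀ u v, ⟪G u, v⟫ = ⟪u, G v⟫) {μ : ℝ} (hcoer : ∀ d, μ * ‖d‖ ^ 2 ≤ ⟪d, G d⟫)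
    {g x xbar : EuclideanSpace ℝ (Fin n)}
    (hmin : IsMinOn (fun y => ⟪g, y - x⟫ + (1 / 2) * ⟪y - x, G (y - x)⟫ + φ y) univ xbar)
    (y : EuclideanSpace ℝ (Fin n)) :
    μ * ‖y - xbar‖ ≤ (1 + ‖G‖) * ‖y - proxPt φ (y - g - G (y - x))‖ := by
  set z := y - g - G (y - x)
  set p := proxPt φ z
  have hderiv : HasFDerivAt (fun u => ⟪g, u - x⟫ + (1 / 2) * ⟪u - x, G (u - x)⟫)
      (innerSL ℝ (g + G (xbar - x))) xbar := by
    rw [map_add]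
    exact (((innerSL ℝ g).hasFDerivAt.comp xbar ((hasFDerivAt_id xbar).sub_const x))).add
      (hasFDerivAt_half_inner_sub_map_sub hG x xbar)
  have hopt := hmin.nonneg_fderiv_add_sub_of_convexOn hφ hderiv (mem_univ xbar) (mem_univ p)
  have hprox := hφ.inner_sub_proxPt_le z xbar
  refine mul_norm_le_of_inner_sub_map_nonpos (hcoer _) ?_
  have hleft : y - p - G (y - xbar) = (z - p) + (g + G (xbar - x)) := by
    simp only [z, map_sub]
    abel
  rw [hleft, show y - p - (y - xbar) = xbar - p by abel, inner_add_left]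
  rw [innerSL_apply_apply, ← neg_sub xbar p, inner_neg_right] at hopt
  linarith

end Euclidean

theorem stmt_12_general {n : ℕ} (f φ : EuclideanSpace ℝ (Fin n) → ℝ)
    (hφ : ConvexOn ℝ Set.univ φ)
    (x : EuclideanSpace ℝ (Fin n)) (gx : EuclideanSpace ℝ (Fin n))
    (rx : EuclideanSpace ℝ (Fin n)) (hrne : rx ≠ 0)
    (ν νmin δ : ℝ) (hνmin : 0 < νmin) (hν : νmin ≤ ν)
    (μ : ℝ) (hμ : μ = ν * ‖rx‖ ^ δ)
    (G : EuclideanSpace ℝ (Fin n) →L[ℝ] EuclideanSpace ℝ (Fin n))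
    (hGsym : ∀ u v, ⟪G u, v⟫ = ⟪u, G v⟫)
    (hGcoer : ∀ d, μ * ‖d‖ ^ 2 ≤ ⟪d, G d⟫)
    (qhat : EuclideanSpace ℝ (Fin n) → ℝ)
    (hqhat : ∀ y, qhat y = f x + ⟪gx, y - x⟫ + (1 / 2) * ⟪y - x, G (y - x)⟫ + φ y)
    (xbar : EuclideanSpace ℝ (Fin n)) (hxbar : ∀ y, qhat xbar ≤ qhat y)
    (R : EuclideanSpace ℝ (Fin n) → EuclideanSpace ℝ (Fin n))
    (hR : ∀ y, R y = y - proxPt φ (y - gx - G (y - x)))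
    (θ τ : ℝ)
    (xhat : EuclideanSpace ℝ (Fin n)) (hin : ‖R xhat‖ ≤ θ * ‖rx‖ ^ (1 + τ)) :
    μ * ‖xhat - xbar‖ ≤ (1 + ‖G‖) * ‖R xhat‖ ∧
    ‖xhat - xbar‖ ≤ νmin⁻¹ * θ * (1 + ‖G‖) * ‖rx‖ ^ (1 + τ - δ) := by
  have hmodel : IsMinOn (fun y => ⟪gx, y - x⟫ + (1 / 2) * ⟪y - x, G (y - x)⟫ + φ y) univ xbar :=
    isMinOn_univ_iff.2 fun y => by linarith [hqhat xbar, hqhat y, hxbar y]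
  have hresidual : μ * ‖xhat - xbar‖ ≤ (1 + ‖G‖) * ‖R xhat‖ :=
    hR xhat ▸ hφ.mul_norm_sub_le_norm_sub_proxPt hGsym hGcoer hmodel xhat
  refine ⟨hresidual, ?_⟩
  have hr : 0 < ‖rx‖ := norm_pos_iff.2 hrne
  have hμ_ge : νmin * ‖rx‖ ^ δ ≤ μ := hμ ▸ mul_le_mul_of_nonneg_right hν (by positivity)
  refine le_of_mul_le_mul_left ?_ (by positivity : 0 < νmin * ‖rx‖ ^ δ)
  calc νmin * ‖rx‖ ^ δ * ‖xhat - xbar‖ ≤ μ * ‖xhat - xbar‖ := by gcongr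
    _ ≤ (1 + ‖G‖) * (θ * ‖rx‖ ^ (1 + τ)) := hresidual.trans (by gcongr)
    _ = νmin * ‖rx‖ ^ δ * (νmin⁻¹ * θ * (1 + ‖G‖) * ‖rx‖ ^ (1 + τ - δ)) := by
      have hsplit : ‖rx‖ ^ δ * ‖rx‖ ^ (1 + τ - δ) = ‖rx‖ ^ (1 + τ) := by
        rw [← Real.rpow_add hr, add_sub_cancel]
      rw [← hsplit]
      field_simp

/-- With `μ = ν‖r(x)‖^δ`, `ν ≥ ν_min > 0`, `δ ∈ (0,1]`, `G` symmetric and `μ`-coercive, `x̄`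
the minimizer of the regularized model `q̂`, and `x̂` with `‖R(x̂)‖ ≤ θ‖r(x)‖^{1+τ}` (`θ > 0`,
`τ ≥ δ`): `μ‖x̂ − x̄‖ ≤ (1 + ‖G‖)‖R(x̂)‖` and
`‖x̂ − x̄‖ ≤ ν_min⁻¹ θ (1 + ‖G‖) ‖r(x)‖^{1+τ−δ}`. -/
theorem stmt_12 {n : ℕ} (f φ : EuclideanSpace ℝ (Fin n) → ℝ)
    (hφ : ConvexOn ℝ Set.univ φ)
    (x : EuclideanSpace ℝ (Fin n)) (gx : EuclideanSpace ℝ (Fin n))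
    (hf : HasGradientAt f gx x)
    (rx : EuclideanSpace ℝ (Fin n)) (hrx : rx = x - proxPt φ (x - gx)) (hrne : rx ≠ 0)
    (ν νmin δ : ℝ) (hνmin : 0 < νmin) (hν : νmin ≤ ν) (hδ0 : 0 < δ) (hδ1 : δ ≤ 1)
    (μ : ℝ) (hμ : μ = ν * ‖rx‖ ^ δ)
    (G : EuclideanSpace ℝ (Fin n) →L[ℝ] EuclideanSpace ℝ (Fin n))
    (hGsym : ∀ u v, ⟪G u, v⟫ = ⟪u, G v⟫)
    (hGcoer : ∀ d, μ * ‖d‖ ^ 2 ≤ ⟪d, G d⟫)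
    (qhat : EuclideanSpace ℝ (Fin n) → ℝ)
    (hqhat : ∀ y, qhat y = f x + ⟪gx, y - x⟫ + (1 / 2) * ⟪y - x, G (y - x)⟫ + φ y)
    (xbar : EuclideanSpace ℝ (Fin n)) (hxbar : ∀ y, qhat xbar ≤ qhat y)
    (R : EuclideanSpace ℝ (Fin n) → EuclideanSpace ℝ (Fin n))
    (hR : ∀ y, R y = y - proxPt φ (y - gx - G (y - x)))
    (θ τ : ℝ) (hθ : 0 < θ) (hτ : δ ≤ τ)
    (xhat : EuclideanSpace ℝ (Fin n)) (hin : ‖R xhat‖ ≤ θ * ‖rx‖ ^ (1 + τ)) :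
    μ * ‖xhat - xbar‖ ≤ (1 + ‖G‖) * ‖R xhat‖ ∧
    ‖xhat - xbar‖ ≤ νmin⁻¹ * θ * (1 + ‖G‖) * ‖rx‖ ^ (1 + τ - δ) :=
  stmt_12_general f φ hφ x gx rx hrne ν νmin δ hνmin hν μ hμ G hGsym hGcoer qhat hqhat xbar hxbar R
    hR θ τ xhat hin
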